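/- Greedy farthest-first selection is a 2-approximation for the k-center problem: if C_K is the set of K centers produced by farthest-first traversal on a finite set Z (starting from any point of Z), then the covering radius of C_K is at most twice the optimal K-center covering radius: max_{z∈Z} min_{c∈C_K} d(z,c) ≤ 2 · min_{C⊆Z, |C|=K} max_{z∈Z} min_{c∈C} d(z,c). -/

import Mathlib

/-!
Let `C ⊆ Z` have `K` points and covering radius `R`. The `K + 1` greedy points
`c 0, …, c K` lie in `Z`, so each is within `R` of `C`, and by pigeonhole two of them,
`c i` and `c j` with `i < j`, share a nearest point of `C`; hence `dist (c j) (c i) ≤ 2 R`.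
On the other hand `c j` was chosen farthest from `c 0, …, c (j - 1)`, so every `z ∈ Z` is
at distance at most `dist (c j) (c i)` from these, and a fortiori from `c 0, …, c (K - 1)`.
-/

open Finset

theorem exists_lt_dist_le_two_mul {X ι : Type*} [PseudoMetricSpace X] [LinearOrder ι]
    {s : Finset ι} {C : Finset X} (hcard : C.card < s.card) (p : ι → X) {R : ℝ}
    (hcover : ∀ i ∈ s, ∃ m ∈ C, dist (p i) m ≤ R) :
    ∃ i ∈ s, ∃ j ∈ s, i < j ∧ dist (p j) (p i) ≤ 2 * R := by
  obtain ⟨i₀, -⟩ := card_pos.mp ((Nat.zero_le _).trans_lt hcard)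
  have : Nonempty X := ⟨p i₀⟩
  choose! nearest hnearest_mem hnearest using hcover
  obtain ⟨i, hi, j, hj, hij, hsame⟩ :=
    exists_ne_map_eq_of_card_lt_of_maps_to hcard fun i hi => hnearest_mem i hi
  have hdist : dist (p j) (p i) ≤ 2 * R := by
    calc dist (p j) (p i) ≤ dist (p j) (nearest j) + dist (p i) (nearest i) := by
          rw [hsame]; exact dist_triangle_right _ _ _
      _ ≤ 2 * R := by linarith [hnearest i hi, hnearest j hj]
  rcases hij.lt_or_gt with hlt | hgt
  · exact ⟨i, hi, j, hj, hlt, hdist⟩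
  · exact ⟨j, hj, i, hi, hgt, by rwa [dist_comm]⟩

theorem inf'_range_dist_le_dist_of_farthest {X : Type*} [PseudoMetricSpace X]
    {Z : Finset X} {c : ℕ → X}
    (hfar : ∀ ℓ : ℕ, ∀ z ∈ Z,
      (range (ℓ + 1)).inf' nonempty_range_add_one (fun i => dist z (c i)) ≤
        (range (ℓ + 1)).inf' nonempty_range_add_one (fun i => dist (c (ℓ + 1)) (c i)))
    {K : ℕ} (hK : K ≠ 0) {z : X} (hz : z ∈ Z) {i j : ℕ} (hij : i < j) (hjK : j ≤ K) :
    (range K).inf' (nonempty_range_iff.mpr hK) (fun n => dist z (c n)) ≤ dist (c j) (c i) := by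
  obtain ⟨ℓ, rfl⟩ : ∃ ℓ, j = ℓ + 1 := Nat.exists_eq_add_one_of_ne_zero (by omega)
  calc (range K).inf' _ (fun n => dist z (c n))
      ≤ (range (ℓ + 1)).inf' nonempty_range_add_one (fun n => dist z (c n)) :=
        inf'_mono _ (range_subset_range.mpr hjK) _
    _ ≤ (range (ℓ + 1)).inf' nonempty_range_add_one (fun n => dist (c (ℓ + 1)) (c n)) :=
        hfar ℓ z hz
    _ ≤ dist (c (ℓ + 1)) (c i) := inf'_le _ (mem_range.mpr hij)

/-- Farthest-first traversal is a 2-approximation for the k-center problem. -/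
theorem farthest_first_two_approx {X : Type*} [MetricSpace X]
    (Z : Finset X) (K : ℕ) (hK : 1 ≤ K)
    (c : ℕ → X) (hc0 : c 0 ∈ Z)
    (hgreedy : ∀ ℓ : ℕ, c (ℓ + 1) ∈ Z ∧
      ∀ z ∈ Z,
        (Finset.range (ℓ + 1)).inf' (by simp) (fun i => dist z (c i)) ≤
          (Finset.range (ℓ + 1)).inf' (by simp) (fun i => dist (c (ℓ + 1)) (c i)))
    (hZ : Z.Nonempty) :
    ∀ C : Finset X, C ⊆ Z → C.card = K →
      ∀ hC : C.Nonempty,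
        Z.sup' hZ (fun z => (Finset.range K).inf' (Finset.nonempty_range_iff.mpr (by omega)) (fun i => dist z (c i))) ≤
          2 * Z.sup' hZ (fun z => C.inf' hC (fun m => dist z m)) := by
  rintro C - hCcard hC
  have hc : ∀ k, c k ∈ Z := fun
    | 0 => hc0
    | ℓ + 1 => (hgreedy ℓ).1
  have hcover : ∀ k ∈ range (K + 1), ∃ m ∈ C,
      dist (c k) m ≤ Z.sup' hZ (fun z => C.inf' hC (dist z)) :=
    fun k _ => (inf'_le_iff hC).mp (le_sup' (fun z => C.inf' hC (dist z)) (hc k))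
  obtain ⟨i, -, j, hj, hij, hdist⟩ :=
    exists_lt_dist_le_two_mul (by simp [hCcard]) c hcover
  refine sup'_le _ _ fun z hz => le_trans ?_ hdist
  exact inf'_range_dist_le_dist_of_farthest (fun ℓ => (hgreedy ℓ).2) (by omega) hz hij
    (Nat.lt_succ_iff.mp (mem_range.mp hj))
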